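/- Let k ≥ 2 be an integer and let G be a simple graph on n ≥ 2 vertices such that every pair of distinct non-adjacent vertices of G has at least 2·log_k(n) common neighbors. Then G is connected and rc(G) ≤ k. -/

import Mathlib

/-
Colour the edges uniformly at random with `k` colours. For a non-adjacent pair `u, v`, the event
that every path `u - w - v` through a common neighbour `w` is monochromatic has probability
`k ^ (-#common) ≤ n⁻²`, since the edge pairs `{uw, vw}` are pairwise disjoint. There are fewer
than `n²` such pairs, so some colouring avoids all these events; then every pair of vertices is
joined by an edge or by a rainbow path of length two.
-/

open SimpleGraph

/-- A graph `G` is rainbow connected under an edge-coloring `c` if every pair of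
distinct vertices is joined by a path whose edges receive pairwise distinct colors. -/
def IsRainbowConnected {V α : Type*} (G : SimpleGraph V) (c : Sym2 V → α) : Prop :=
  ∀ u v : V, u ≠ v → ∃ p : G.Walk u v, p.IsPath ∧ (p.edges.map c).Nodup

open Finset

lemma pow_le_pow_of_mul_logb_le {b x e m : ℕ} (hb : 1 < b) (hx : 0 < x)
    (h : e * Real.logb b x ≤ m) : x ^ e ≤ b ^ m := by
  rw [← Real.logb_pow, Real.logb_le_iff_le_rpow (by exact_mod_cast hb) (by positivity),
    Real.rpow_natCast] at h
  exact_mod_cast h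

lemma exists_forall_notMem_of_card_mul_le {α ι : Type*} [Fintype α] [Nonempty α]
    (P : Finset ι) (B : ι → Finset α) {M : ℕ} (hB : ∀ p ∈ P, #(B p) * M ≤ Fintype.card α)
    (hP : #P < M) : ∃ a, ∀ p ∈ P, a ∉ B p := by
  classical
  by_contra! hcover
  have hcard : Fintype.card α ≤ ∑ p ∈ P, #(B p) := calc
    Fintype.card α = #(univ : Finset α) := card_univ.symm
    _ ≤ #(P.biUnion B) := card_le_card fun a _ ↦ mem_biUnion.mpr (hcover a)
    _ ≤ ∑ p ∈ P, #(B p) := card_biUnion_le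
  have : Fintype.card α * M < M * Fintype.card α := calc
    Fintype.card α * M ≤ ∑ p ∈ P, #(B p) * M := by rw [← sum_mul]; gcongr
    _ ≤ ∑ _p ∈ P, Fintype.card α := sum_le_sum hB
    _ = #P * Fintype.card α := by rw [sum_const, smul_eq_mul]
    _ < M * Fintype.card α := Nat.mul_lt_mul_of_pos_right hP Fintype.card_pos
  exact this.not_ge (Nat.mul_comm _ _).le

lemma card_filter_forall_eq_mul_pow_le {α β ι : Type*} [Fintype α] [DecidableEq α]
    [Fintype β] {S : Finset ι} {f g : ι → α}
    [DecidablePred fun c : α → β ↦ ∀ i ∈ S, c (f i) = c (g i)] (hf : Set.InjOn f S)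
    (hfg : ∀ i ∈ S, ∀ j ∈ S, f i ≠ g j) :
    #{c : α → β | ∀ i ∈ S, c (f i) = c (g i)} * Fintype.card β ^ #S ≤
      Fintype.card β ^ Fintype.card α := by
  set T := S.image f
  have hT : #T = #S := card_image_of_injOn hf
  -- a colouring in the filter is determined by its restriction to the complement of `T`
  have hrestrict : #{c : α → β | ∀ i ∈ S, c (f i) = c (g i)} ≤ Fintype.card β ^ #Tᶜ := by
    rw [← Fintype.card_coe Tᶜ, ← Fintype.card_fun, ← card_univ]
    refine card_le_card_of_injOn (fun c (a : ↥Tᶜ) ↦ c a) (fun _ _ ↦ mem_univ _) ?_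
    intro c₁ hc₁ c₂ hc₂ heq
    have hoff : ∀ a ∉ T, c₁ a = c₂ a := fun a ha ↦ congrFun heq ⟨a, mem_compl.mpr ha⟩
    funext a
    by_cases ha : a ∈ T
    · obtain ⟨i, hi, rfl⟩ := mem_image.mp ha
      have hgi : g i ∉ T := by
        simp only [T, mem_image, not_exists, not_and]
        exact fun j hj ↦ hfg j hj i hi
      rw [(mem_filter.mp hc₁).2 i hi, (mem_filter.mp hc₂).2 i hi, hoff _ hgi]
    · exact hoff a ha
  calc _ ≤ Fintype.card β ^ #Tᶜ * Fintype.card β ^ #T := by rw [hT]; gcongr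
    _ = Fintype.card β ^ Fintype.card α := by rw [← pow_add, card_compl_add_card]

variable {V β : Type*}

lemma IsRainbowConnected.preconnected {G : SimpleGraph V} {c : Sym2 V → β}
    (hc : IsRainbowConnected G c) : G.Preconnected := by
  intro u v
  obtain rfl | huv := eq_or_ne u v
  · rfl
  · obtain ⟨p, -⟩ := hc u v huv
    exact p.reachable

lemma isRainbowConnected_of_exists_common_neighbor {G : SimpleGraph V} {c : Sym2 V → β}
    (h : ∀ u v, u ≠ v → ¬ G.Adj u v → ∃ w, G.Adj u w ∧ G.Adj v w ∧ c s(u, w) ≠ c s(v, w)) :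
    IsRainbowConnected G c := by
  intro u v huv
  by_cases hadj : G.Adj u v
  · exact ⟨hadj.toWalk, by simp [hadj.ne], by simp⟩
  · obtain ⟨w, huw, hvw, hne⟩ := h u v huv hadj
    refine ⟨.cons huw hvw.symm.toWalk, ?_, ?_⟩
    · simp [Walk.cons_isPath_iff, huw.ne, hvw.ne', huv]
    · simpa [Sym2.eq_swap (a := w)] using hne

lemma card_filter_monochromatic_mul_pow_le [Fintype V] [DecidableEq V] [Fintype β]
    [DecidableEq β] {u v : V} (huv : u ≠ v) {S : Finset V} (hu : u ∉ S) :
    #{c : Sym2 V → β | ∀ w ∈ S, c s(u, w) = c s(v, w)} * Fintype.card β ^ #S ≤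
      Fintype.card β ^ Fintype.card (Sym2 V) := by
  have hf : Set.InjOn (fun w ↦ s(u, w)) S := fun _ _ _ _ h ↦ Sym2.congr_right.mp h
  have hfg : ∀ i ∈ S, ∀ j ∈ S, s(u, i) ≠ s(v, j) := by
    intro i hi j hj heq
    rcases Sym2.eq_iff.mp heq with ⟨h, -⟩ | ⟨h, -⟩
    · exact huv h
    · exact hu (h ▸ hj)
  exact card_filter_forall_eq_mul_pow_le hf hfg

lemma exists_coloring_of_card_sq_le_pow [Fintype V] [DecidableEq V] [Nonempty V] [Fintype β]
    [Nonempty β] (G : SimpleGraph V) [DecidableRel G.Adj]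
    (h : ∀ u v, u ≠ v → ¬ G.Adj u v →
      Fintype.card V ^ 2 ≤ Fintype.card β ^ #(G.neighborFinset u ∩ G.neighborFinset v)) :
    ∃ c : Sym2 V → β,
      ∀ u v, u ≠ v → ¬ G.Adj u v → ∃ w, G.Adj u w ∧ G.Adj v w ∧ c s(u, w) ≠ c s(v, w) := by
  classical
  let P : Finset (V × V) := {p | p.1 ≠ p.2 ∧ ¬ G.Adj p.1 p.2}
  let B (p : V × V) : Finset (Sym2 V → β) :=
    {c | ∀ w ∈ G.neighborFinset p.1 ∩ G.neighborFinset p.2, c s(p.1, w) = c s(p.2, w)}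
  have hP : #P < Fintype.card V ^ 2 := by
    obtain ⟨v⟩ := ‹Nonempty V›
    rw [sq, ← Fintype.card_prod, ← card_univ]
    refine card_lt_card ⟨subset_univ _, fun hsub ↦ ?_⟩
    exact (mem_filter.mp (hsub (mem_univ (v, v)))).2.1 rfl
  have hB : ∀ p ∈ P, #(B p) * Fintype.card V ^ 2 ≤ Fintype.card (Sym2 V → β) := by
    rintro ⟨u, v⟩ hp
    obtain ⟨huv, hadj⟩ := (mem_filter.mp hp).2
    rw [Fintype.card_fun]
    calc _ ≤ #(B (u, v)) * Fintype.card β ^ #(G.neighborFinset u ∩ G.neighborFinset v) :=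
          Nat.mul_le_mul_left _ (h u v huv hadj)
      _ ≤ _ := card_filter_monochromatic_mul_pow_le huv (by simp)
  obtain ⟨c, hc⟩ := exists_forall_notMem_of_card_mul_le P B hB hP
  refine ⟨c, fun u v huv hadj ↦ ?_⟩
  have hgood := hc (u, v) (mem_filter.mpr ⟨mem_univ _, huv, hadj⟩)
  simp only [B, mem_filter, mem_univ, true_and, not_forall, mem_inter, mem_neighborFinset] at hgood
  obtain ⟨w, ⟨huw, hvw⟩, hne⟩ := hgood
  exact ⟨w, huw, hvw, hne⟩

/-- If `k ≥ 2` and `G` is a graph on `n ≥ 2` vertices such that every pair of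
distinct non-adjacent vertices has at least `2 log_k n` common neighbors, then
`G` is connected and `rc(G) ≤ k`. -/
theorem rc_le_of_common_neighbors (k n : ℕ) (hk : 2 ≤ k) (hn : 2 ≤ n)
    (G : SimpleGraph (Fin n)) [DecidableRel G.Adj]
    (h : ∀ u v : Fin n, u ≠ v → ¬ G.Adj u v →
      2 * Real.logb k n ≤ ((G.neighborFinset u ∩ G.neighborFinset v).card : ℝ)) :
    G.Connected ∧ ∃ c : Sym2 (Fin n) → Fin k, IsRainbowConnected G c := by
  have : Nonempty (Fin n) := ⟨⟨0, by omega⟩⟩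
  have : Nonempty (Fin k) := ⟨⟨0, by omega⟩⟩
  have hcard : ∀ u v, u ≠ v → ¬ G.Adj u v → Fintype.card (Fin n) ^ 2 ≤
      Fintype.card (Fin k) ^ #(G.neighborFinset u ∩ G.neighborFinset v) := by
    intro u v huv hadj
    simpa using pow_le_pow_of_mul_logb_le (by omega) (by omega) (by exact_mod_cast h u v huv hadj)
  obtain ⟨c, hc⟩ := exists_coloring_of_card_sq_le_pow G hcard
  have hrainbow := isRainbowConnected_of_exists_common_neighbor hc
  exact ⟨⟨hrainbow.preconnected⟩, c, hrainbow⟩
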